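/- arXiv:1004.4929 — 4 statements merged into one kernel-verified Lean document; each statement's English description precedes it below -/
import Mathlib

section
/- Define a sequence of Laurent polynomials over $\mathbb{Z}$ by $p_1(t) = t+2$ and $p_n(t) = t + 2 + (t + 2 + t^{-1})(p_{n-1}(t) - t)$ for $n \ge 2$. Then for all $n \ge 1$, $p_n(t) = t + 2\sum_{k=1}^{n}\binom{n}{k}(t+1+t^{-1})^{k-1}$. -/
/-!
Writing `u = t + 1 + t⁻¹`, the doubling multiplier is `t + 2 + t⁻¹ = u + 1`, so `qₙ = pₙ - t`
obeys the affine recurrence `qₙ₊₁ = 2 + (u + 1) qₙ` with `q₁ = 2`, whence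
`qₙ = 2 ∑_{i<n} (u + 1)^i`. Expanding the geometric sum binomially
(`∑_{i<n} (X + 1)^i = ∑_{i<n} C(n, i+1) X^i`) gives the stated formula.
-/

open LaurentPolynomial Finset

theorem sum_range_choose_succ_mul_pow_eq_geom_sum {R : Type*} [CommRing R] (u : R) (n : ℕ) :
    ∑ i ∈ range n, (n.choose (i + 1) : R) * u ^ i = ∑ i ∈ range n, (u + 1) ^ i := by
  simpa [Polynomial.eval_finsetSum] using
    (congrArg (Polynomial.eval u) (Polynomial.geom_sum_X_comp_X_add_one_eq_sum (R := R) n)).symm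

theorem sum_Icc_choose_mul_pow_pred_eq_geom_sum {R : Type*} [CommRing R] (u : R) (n : ℕ) :
    ∑ k ∈ Icc 1 n, (n.choose k : R) * u ^ (k - 1) = ∑ i ∈ range n, (u + 1) ^ i := by
  rw [← sum_range_choose_succ_mul_pow_eq_geom_sum, ← Ico_add_one_right_eq_Icc,
    sum_Ico_eq_sum_range]
  simp [add_comm 1]

theorem eq_mul_geom_sum_of_affine_rec {R : Type*} [CommSemiring R] {a : ℕ → R} {c x : R}
    (h1 : a 1 = c) (hrec : ∀ n, 1 ≤ n → a (n + 1) = c + x * a n) :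
    ∀ n, 1 ≤ n → a n = c * ∑ i ∈ range n, x ^ i := by
  intro n hn
  induction n, hn using Nat.le_induction with
  | base => simp [h1]
  | succ n hn ih => rw [hrec n hn, ih, geom_sum_succ]; ring

/-- the sequence of Laurent polynomials defined by `p₁(t) = t + 2` and
`pₙ(t) = t + 2 + (t + 2 + t⁻¹)(p_{n-1}(t) - t)` satisfies
`pₙ(t) = t + 2 ∑_{k=1}^n (n choose k) (t + 1 + t⁻¹)^(k-1)` for all `n ≥ 1`. -/
theorem iterated_double_polynomial (p : ℕ → LaurentPolynomial ℤ)
    (h1 : p 1 = T 1 + 2)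
    (hrec : ∀ n, 2 ≤ n → p n = T 1 + 2 + (T 1 + 2 + T (-1)) * (p (n - 1) - T 1)) :
    ∀ n, 1 ≤ n →
      p n = T 1 + 2 * ∑ k ∈ Finset.Icc 1 n,
        (n.choose k : LaurentPolynomial ℤ) * (T 1 + 1 + T (-1)) ^ (k - 1) := by
  have hgeom := eq_mul_geom_sum_of_affine_rec (a := fun n => p n - T 1) (c := 2)
    (x := T 1 + 1 + T (-1) + 1) (by simp [h1])
    (fun n hn => by simp only [hrec (n + 1) (by omega), Nat.add_sub_cancel]; ring)
  intro n hn
  rw [sum_Icc_choose_mul_pow_pred_eq_geom_sum, ← hgeom n hn]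
  ring
end

section
/- Let $A$ be the commutative $\mathbb{F}$-algebra generated by $a_1,a_2,a_3,a_4$, $x_1,\dots,x_5$, and $\rho_{ij}$ ($1\le i<j\le 4$), modulo the relations $\rho_{12}\rho_{23}=0$, $\rho_{12}\rho_{24}+\rho_{13}\rho_{34}=0$, $\rho_{23}\rho_{34}=0$, $1+\rho_{12}a_1=0$, $1+a_1a_2=0$, $1+a_2a_3=0$, $1+a_3a_4=0$, $1+a_4\rho_{34}=0$. Then $\rho_{12}=a_2=a_4$, $a_1=a_3=\rho_{34}$, $\rho_{12}\rho_{34}=1$, and $A \cong \mathbb{F}[x_1,\dots,x_5]\otimes_{\mathbb{F}}\left(\mathcal{C}'(I_4)/\langle\rho_{12}\rho_{34}=1\rangle\right)$. -/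
/-! Each relation `1 + u v = 0` makes `u` a unit with inverse `-v`, so along the chain
`ρ₁₂, a₁, a₂, a₃, a₄, ρ₃₄` elements two steps apart coincide: `ρ₁₂ = a₂ = a₄` and
`a₁ = a₃ = ρ₃₄`. Then `1 + a₂ a₃ = 0` reads `ρ₁₂ ρ₃₄ = 1` in characteristic `2`. Eliminating the
`aᵢ` leaves on the `ρᵢⱼ` exactly the relations of `𝒞'(I₄)/⟨ρ₁₂ρ₃₄ = 1⟩`, while `x₁, …, x₅` stay
free; the isomorphism sends `a₁, a₃ ↦ ρ₃₄` and `a₂, a₄ ↦ ρ₁₂`. -/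

open MvPolynomial

/-- Generators of the abelianized characteristic algebra `𝒞'(3S̃)` of three concatenated
S tangles: crossings `a₁,…,a₄`, `x₁,…,x₅` and the `ρ_{ij}`. -/
inductive TGen | a1 | a2 | a3 | a4 | x1 | x2 | x3 | x4 | x5 | r12 | r13 | r14 | r23 | r24 | r34

/-- Generators `ρ_{ij}`, `1 ≤ i < j ≤ 4`, of `𝒞'(I₄)`. -/
inductive RhoGen | r12 | r13 | r14 | r23 | r24 | r34

/-- `𝒞'(I₄)/⟨ρ₁₂ρ₃₄ = 1⟩`. -/
noncomputable abbrev CI4R : Type :=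
  MvPolynomial RhoGen (ZMod 2) ⧸ Ideal.span
    ({X RhoGen.r12 * X RhoGen.r23,
      X RhoGen.r12 * X RhoGen.r24 + X RhoGen.r13 * X RhoGen.r34,
      X RhoGen.r23 * X RhoGen.r34,
      X RhoGen.r12 * X RhoGen.r34 - 1} : Set (MvPolynomial RhoGen (ZMod 2)))

/-- The relations of `𝒞'(3S̃)`. -/
noncomputable def TRel : Set (MvPolynomial TGen (ZMod 2)) :=
  {X TGen.r12 * X TGen.r23,
   X TGen.r12 * X TGen.r24 + X TGen.r13 * X TGen.r34,
   X TGen.r23 * X TGen.r34,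
   1 + X TGen.r12 * X TGen.a1,
   1 + X TGen.a1 * X TGen.a2,
   1 + X TGen.a2 * X TGen.a3,
   1 + X TGen.a3 * X TGen.a4,
   1 + X TGen.a4 * X TGen.r34}

open scoped TensorProduct

theorem natCast_eq_zero_of_zmod_algebra (n : ℕ) (R : Type*) [Semiring R] [Algebra (ZMod n) R] :
    (n : R) = 0 := by
  rw [← map_natCast (algebraMap (ZMod n) R), ZMod.natCast_self, map_zero]

theorem one_add_eq_zero_iff_of_zmod_two_algebra {R : Type*} [CommRing R] [Algebra (ZMod 2) R]
    {x : R} : 1 + x = 0 ↔ x = 1 := by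
  have h₂ : (2 : R) = 0 := by exact_mod_cast natCast_eq_zero_of_zmod_algebra 2 R
  exact ⟨fun h ↦ by linear_combination h - h₂, fun h ↦ by linear_combination h + h₂⟩

theorem eq_of_one_add_mul_eq_zero {R : Type*} [CommRing R] {u v w : R}
    (h₁ : 1 + u * v = 0) (h₂ : 1 + v * w = 0) : u = w := by
  linear_combination u * h₂ - w * h₁

theorem mk_span_eq_zero_of_mem {R : Type*} [CommRing R] {s : Set R} {a : R} (ha : a ∈ s) :
    Ideal.Quotient.mk (Ideal.span s) a = 0 :=
  Ideal.Quotient.eq_zero_iff_mem.2 (Ideal.subset_span ha)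

theorem map_eq_zero_of_mem_span {R S F : Type*} [CommSemiring R] [Semiring S] [FunLike F R S]
    [RingHomClass F R S] (f : F) {s : Set R} (h : ∀ a ∈ s, f a = 0) {a : R}
    (ha : a ∈ Ideal.span s) : f a = 0 :=
  Ideal.span_le (I := RingHom.ker f).2 h ha

def RhoGen.toTGen : RhoGen → TGen
  | .r12 => .r12
  | .r13 => .r13
  | .r14 => .r14
  | .r23 => .r23
  | .r24 => .r24
  | .r34 => .r34

namespace ThreeS

local notation "𝒜" => MvPolynomial TGen (ZMod 2) ⧸ Ideal.span TRel
local notation "𝒯" => MvPolynomial (Fin 5) (ZMod 2) ⊗[ZMod 2] CI4R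
local notation "π" => Ideal.Quotient.mk (Ideal.span TRel)
local notation "ρ" => (Ideal.Quotient.mk _ : MvPolynomial RhoGen (ZMod 2) →+* CI4R)

open Algebra.TensorProduct (includeRight)

theorem one_add_mk_mul_mk_eq_zero {g h : TGen} (hgh : 1 + X g * X h ∈ TRel) :
    1 + π (X g) * π (X h) = 0 := by
  simpa using mk_span_eq_zero_of_mem hgh

theorem mk_r12_eq_mk_a2 : π (X TGen.r12) = π (X TGen.a2) :=
  eq_of_one_add_mul_eq_zero (one_add_mk_mul_mk_eq_zero (h := .a1) (by simp [TRel]))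
    (one_add_mk_mul_mk_eq_zero (by simp [TRel]))

theorem mk_a2_eq_mk_a4 : π (X TGen.a2) = π (X TGen.a4) :=
  eq_of_one_add_mul_eq_zero (one_add_mk_mul_mk_eq_zero (h := .a3) (by simp [TRel]))
    (one_add_mk_mul_mk_eq_zero (by simp [TRel]))

theorem mk_a1_eq_mk_a3 : π (X TGen.a1) = π (X TGen.a3) :=
  eq_of_one_add_mul_eq_zero (one_add_mk_mul_mk_eq_zero (h := .a2) (by simp [TRel]))
    (one_add_mk_mul_mk_eq_zero (by simp [TRel]))

theorem mk_a3_eq_mk_r34 : π (X TGen.a3) = π (X TGen.r34) :=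
  eq_of_one_add_mul_eq_zero (one_add_mk_mul_mk_eq_zero (h := .a4) (by simp [TRel]))
    (one_add_mk_mul_mk_eq_zero (by simp [TRel]))

theorem mk_r12_mul_mk_r34 : π (X TGen.r12) * π (X TGen.r34) = 1 := by
  rw [mk_r12_eq_mk_a2, ← mk_a3_eq_mk_r34]
  exact one_add_eq_zero_iff_of_zmod_two_algebra.1 (one_add_mk_mul_mk_eq_zero (by simp [TRel]))

theorem rho_r12_mul_rho_r23 : ρ (X RhoGen.r12) * ρ (X RhoGen.r23) = 0 := by
  rw [← map_mul]; exact mk_span_eq_zero_of_mem (by simp)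

theorem rho_r12_mul_rho_r24_add_rho_r13_mul_rho_r34 :
    ρ (X RhoGen.r12) * ρ (X RhoGen.r24) + ρ (X RhoGen.r13) * ρ (X RhoGen.r34) = 0 := by
  rw [← map_mul, ← map_mul, ← map_add]; exact mk_span_eq_zero_of_mem (by simp)

theorem rho_r23_mul_rho_r34 : ρ (X RhoGen.r23) * ρ (X RhoGen.r34) = 0 := by
  rw [← map_mul]; exact mk_span_eq_zero_of_mem (by simp)

theorem one_add_rho_r12_mul_rho_r34 : 1 + ρ (X RhoGen.r12) * ρ (X RhoGen.r34) = 0 := by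
  rw [one_add_eq_zero_iff_of_zmod_two_algebra, ← sub_eq_zero, ← map_mul, ← map_one ρ, ← map_sub]
  exact mk_span_eq_zero_of_mem (by simp)

theorem one_add_rho_r34_mul_rho_r12 : 1 + ρ (X RhoGen.r34) * ρ (X RhoGen.r12) = 0 := by
  rw [mul_comm (ρ (X RhoGen.r34)), one_add_rho_r12_mul_rho_r34]

noncomputable def toTensorGen : TGen → 𝒯
  | .x1 => X 0 ⊗ₜ 1
  | .x2 => X 1 ⊗ₜ 1
  | .x3 => X 2 ⊗ₜ 1
  | .x4 => X 3 ⊗ₜ 1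
  | .x5 => X 4 ⊗ₜ 1
  | .a2 | .a4 | .r12 => includeRight (ρ (X .r12))
  | .a1 | .a3 | .r34 => includeRight (ρ (X .r34))
  | .r13 => includeRight (ρ (X .r13))
  | .r14 => includeRight (ρ (X .r14))
  | .r23 => includeRight (ρ (X .r23))
  | .r24 => includeRight (ρ (X .r24))

/- Stated through `toRingHom`: for the `AlgHom` itself, `map_one` does not fire on this
target. -/
theorem aeval_toTensorGen_eq_zero_of_mem_TRel {p : MvPolynomial TGen (ZMod 2)} (hp : p ∈ TRel) :
    (aeval toTensorGen).toRingHom p = 0 := by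
  simp only [TRel, Set.mem_insert_iff, Set.mem_singleton_iff] at hp
  rcases hp with rfl | rfl | rfl | rfl | rfl | rfl | rfl | rfl <;>
    simp only [map_add, map_mul, map_one, AlgHom.toRingHom_eq_coe, RingHom.coe_coe, aeval_X,
      toTensorGen] <;>
    simp only [← map_mul includeRight, ← map_one includeRight, ← map_add includeRight] <;>
    simp only [rho_r12_mul_rho_r23, rho_r12_mul_rho_r24_add_rho_r13_mul_rho_r34,
      rho_r23_mul_rho_r34, one_add_rho_r12_mul_rho_r34, one_add_rho_r34_mul_rho_r12, map_zero]

noncomputable def toTensor : 𝒜 →ₐ[ZMod 2] 𝒯 :=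
  Ideal.Quotient.liftₐ _ (aeval toTensorGen) fun _ ↦
    map_eq_zero_of_mem_span _ fun _ ↦ aeval_toTensorGen_eq_zero_of_mem_TRel

theorem toTensor_mk (p : MvPolynomial TGen (ZMod 2)) : toTensor (π p) = aeval toTensorGen p :=
  rfl

noncomputable def ofCI4R : CI4R →ₐ[ZMod 2] 𝒜 :=
  Ideal.quotientMapₐ _ (rename RhoGen.toTGen) <| Ideal.span_le.2 <| by
    simp only [Set.insert_subset_iff, Set.singleton_subset_iff, SetLike.mem_coe, Ideal.mem_comap]
    refine ⟨Ideal.subset_span ?_, Ideal.subset_span ?_, Ideal.subset_span ?_,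
      Ideal.Quotient.eq_zero_iff_mem.1 ?_⟩
    · simp [TRel, RhoGen.toTGen]
    · simp [TRel, RhoGen.toTGen]
    · simp [TRel, RhoGen.toTGen]
    · simp [RhoGen.toTGen, mk_r12_mul_mk_r34]

noncomputable def ofTensor : 𝒯 →ₐ[ZMod 2] 𝒜 :=
  Algebra.TensorProduct.productMap (aeval fun i ↦ π (X (![.x1, .x2, .x3, .x4, .x5] i : TGen)))
    ofCI4R

theorem toTensor_comp_ofTensor : toTensor.comp ofTensor = AlgHom.id _ _ := by
  apply Algebra.TensorProduct.ext
  · apply MvPolynomial.algHom_ext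
    intro i
    fin_cases i <;> simp [toTensor_mk, ofTensor, toTensorGen]
  · apply Ideal.Quotient.algHom_ext
    apply MvPolynomial.algHom_ext
    intro r
    cases r <;> simp [toTensor_mk, ofTensor, ofCI4R, toTensorGen, RhoGen.toTGen]

theorem ofTensor_comp_toTensor : ofTensor.comp toTensor = AlgHom.id _ _ := by
  apply Ideal.Quotient.algHom_ext
  apply MvPolynomial.algHom_ext
  intro g
  cases g <;> simp [toTensor_mk, ofTensor, ofCI4R, toTensorGen, RhoGen.toTGen]
  exacts [(mk_a1_eq_mk_a3.trans mk_a3_eq_mk_r34).symm, mk_r12_eq_mk_a2, mk_a3_eq_mk_r34.symm,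
    mk_r12_eq_mk_a2.trans mk_a2_eq_mk_a4]

noncomputable def equivTensor : 𝒜 ≃ₐ[ZMod 2] 𝒯 :=
  AlgEquiv.ofAlgHom toTensor ofTensor toTensor_comp_ofTensor ofTensor_comp_toTensor

end ThreeS

/-- in `A = 𝒞'(3S̃)` we have `ρ₁₂ = a₂ = a₄`, `a₁ = a₃ = ρ₃₄`, and
`ρ₁₂ρ₃₄ = 1`, and `A ≅ 𝔽[x₁,…,x₅] ⊗ (𝒞'(I₄)/⟨ρ₁₂ρ₃₄ = 1⟩)`. -/
theorem characteristic_algebra_3S :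
    letI π := Ideal.Quotient.mk (Ideal.span TRel)
    π (X TGen.r12) = π (X TGen.a2) ∧
    π (X TGen.a2) = π (X TGen.a4) ∧
    π (X TGen.a1) = π (X TGen.a3) ∧
    π (X TGen.a3) = π (X TGen.r34) ∧
    π (X TGen.r12 * X TGen.r34) = 1 ∧
    Nonempty ((MvPolynomial TGen (ZMod 2) ⧸ Ideal.span TRel) ≃ₐ[ZMod 2]
      TensorProduct (ZMod 2) (MvPolynomial (Fin 5) (ZMod 2)) CI4R) :=
  ⟨ThreeS.mk_r12_eq_mk_a2, ThreeS.mk_a2_eq_mk_a4, ThreeS.mk_a1_eq_mk_a3, ThreeS.mk_a3_eq_mk_r34,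
    (map_mul _ _ _).trans ThreeS.mk_r12_mul_mk_r34, ⟨ThreeS.equivTensor⟩⟩
end

section
/- Let $D''$ be the DGA over $\mathbb{F}=\mathbb{Z}/2\mathbb{Z}$ freely generated by $x, y, a, b, c, d$ and $\rho_{ij}$ ($1\le i<j\le 4$) with $\partial x = 1 + \rho_{12}(ab+1) + \rho_{13}b$, $\partial y = 1 + (ba+1)\rho_{34} + b\rho_{24}$, $\partial a = \rho_{23}$, $\partial b = 0$, $\partial c = b$, $\partial d = a + \rho_{13} + (x + (\rho_{12}a + \rho_{13})c)\rho_{23}$, and $\partial\rho_{ij} = \sum_{i<k<j}\rho_{ik}\rho_{kj}$. Then $\partial^2 = 0$ on $D''$, and after the tame automorphisms $x \mapsto x + (\rho_{12}a + \rho_{13})c$, $y \mapsto y + c(a\rho_{34} + \rho_{24})$, $a \mapsto a + \rho_{13} + x\rho_{23}$, the differential satisfies $\partial x = 1 + \rho_{12}$, $\partial y = 1 + \rho_{34}$, $\partial d = a$, $\partial a = 0$, $\partial c = b$, $\partial b = 0$. -/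
/-- The free generators of the DGA `D''`: `x, y, a, b, c, d` and the `ρ_{ij}`. -/
inductive DGen | x | y | a | b | c | d | r12 | r13 | r14 | r23 | r24 | r34

/-- The underlying free associative unital `𝔽₂`-algebra of `D''`. -/
abbrev Dalg : Type := FreeAlgebra (ZMod 2) DGen

noncomputable def g (v : DGen) : Dalg := FreeAlgebra.ι (ZMod 2) v

/-- The elementary substitution `x ↦ x + (ρ₁₂a + ρ₁₃)c`. -/
noncomputable def φx : Dalg →ₐ[ZMod 2] Dalg :=
  FreeAlgebra.lift (ZMod 2) fun v => match v with
    | DGen.x => g DGen.x + (g DGen.r12 * g DGen.a + g DGen.r13) * g DGen.c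
    | v => g v

/-- The elementary substitution `y ↦ y + c(aρ₃₄ + ρ₂₄)`. -/
noncomputable def φy : Dalg →ₐ[ZMod 2] Dalg :=
  FreeAlgebra.lift (ZMod 2) fun v => match v with
    | DGen.y => g DGen.y + g DGen.c * (g DGen.a * g DGen.r34 + g DGen.r24)
    | v => g v

/-- The elementary substitution `a ↦ a + ρ₁₃ + xρ₂₃`. -/
noncomputable def φa : Dalg →ₐ[ZMod 2] Dalg :=
  FreeAlgebra.lift (ZMod 2) fun v => match v with
    | DGen.a => g DGen.a + g DGen.r13 + g DGen.x * g DGen.r23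
    | v => g v

/-- The composite tame automorphism: first the `x`-, then the `y`-, then the
`a`-substitution. -/
noncomputable def Ψ : Dalg →ₐ[ZMod 2] Dalg := φa.comp (φy.comp φx)

noncomputable def Ψinv : Dalg →ₐ[ZMod 2] Dalg := φx.comp (φy.comp φa)

lemma addself (u : Dalg) : u + u = 0 := by
  have h : u + u = (2 : ZMod 2) • u := (two_smul (ZMod 2) u).symm
  rw [h, show (2 : ZMod 2) = 0 from rfl, zero_smul]

lemma twosmul (u : Dalg) : (2:ℕ) • u = 0 := by
  rw [two_nsmul]; exact addself u

lemma two_eq_zero : (2 : Dalg) = 0 := by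
  rw [show (2:Dalg) = 1+1 by norm_num]; exact addself 1

lemma psi_inv_right : Ψ.comp Ψinv = AlgHom.id (ZMod 2) Dalg := by
  apply FreeAlgebra.hom_ext
  funext v
  cases v <;>
    simp [Ψ, Ψinv, φx, φy, φa, g, mul_add, add_mul, mul_assoc] <;>
    abel_nf <;>
    simp [twosmul, two_eq_zero]

lemma psi_inv_left : Ψinv.comp Ψ = AlgHom.id (ZMod 2) Dalg := by
  apply FreeAlgebra.hom_ext
  funext v
  cases v <;>
    simp [Ψ, Ψinv, φx, φy, φa, g, mul_add, add_mul, mul_assoc] <;>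
    abel_nf <;>
    simp [twosmul, two_eq_zero]

lemma pinv_x : Ψinv (g DGen.x) =
    g DGen.x + (g DGen.r12 * g DGen.a + g DGen.r13) * g DGen.c := by
  simp [Ψinv, φx, φy, φa, g]

lemma pinv_y : Ψinv (g DGen.y) =
    g DGen.y + g DGen.c * (g DGen.a * g DGen.r34 + g DGen.r24) := by
  simp [Ψinv, φx, φy, φa, g]

lemma pinv_a : Ψinv (g DGen.a) = g DGen.a + g DGen.r13 +
    (g DGen.x + (g DGen.r12 * g DGen.a + g DGen.r13) * g DGen.c) * g DGen.r23 := by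
  simp [Ψinv, φx, φy, φa, g]

lemma pinv_b : Ψinv (g DGen.b) = g DGen.b := by simp [Ψinv, φx, φy, φa, g]
lemma pinv_c : Ψinv (g DGen.c) = g DGen.c := by simp [Ψinv, φx, φy, φa, g]
lemma pinv_d : Ψinv (g DGen.d) = g DGen.d := by simp [Ψinv, φx, φy, φa, g]

lemma psi_b : Ψ (g DGen.b) = g DGen.b := by simp [Ψ, φx, φy, φa, g]
lemma psi_r12 : Ψ (g DGen.r12) = g DGen.r12 := by simp [Ψ, φx, φy, φa, g]

/-- for the differential of `D''` with the stated values on the generators,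
`∂² = 0`, and after the tame automorphisms `x ↦ x + (ρ₁₂a+ρ₁₃)c`, `y ↦ y + c(aρ₃₄+ρ₂₄)`,
`a ↦ a + ρ₁₃ + xρ₂₃` the differential satisfies `∂x = 1+ρ₁₂`, `∂y = 1+ρ₃₄`, `∂d = a`,
`∂a = 0`, `∂c = b`, `∂b = 0`. -/
theorem tame_iso_unhook_clasp (dd : Dalg →ₗ[ZMod 2] Dalg)
    (hleib : ∀ u v : Dalg, dd (u * v) = dd u * v + u * dd v)
    (hx : dd (g DGen.x) = 1 + g DGen.r12 * (g DGen.a * g DGen.b + 1) + g DGen.r13 * g DGen.b)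
    (hy : dd (g DGen.y) = 1 + (g DGen.b * g DGen.a + 1) * g DGen.r34 + g DGen.b * g DGen.r24)
    (ha : dd (g DGen.a) = g DGen.r23)
    (hb : dd (g DGen.b) = 0)
    (hc : dd (g DGen.c) = g DGen.b)
    (hd : dd (g DGen.d) = g DGen.a + g DGen.r13 +
      (g DGen.x + (g DGen.r12 * g DGen.a + g DGen.r13) * g DGen.c) * g DGen.r23)
    (h12 : dd (g DGen.r12) = 0) (h23 : dd (g DGen.r23) = 0) (h34 : dd (g DGen.r34) = 0)
    (h13 : dd (g DGen.r13) = g DGen.r12 * g DGen.r23)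
    (h24 : dd (g DGen.r24) = g DGen.r23 * g DGen.r34)
    (h14 : dd (g DGen.r14) = g DGen.r12 * g DGen.r24 + g DGen.r13 * g DGen.r34) :
    (∀ z : Dalg, dd (dd z) = 0) ∧
    ∃ d' : Dalg →ₗ[ZMod 2] Dalg,
      (∀ u v : Dalg, d' (u * v) = d' u * v + u * d' v) ∧
      (∀ z : Dalg, d' (Ψ z) = Ψ (dd z)) ∧
      d' (g DGen.x) = 1 + g DGen.r12 ∧
      d' (g DGen.y) = 1 + g DGen.r34 ∧
      d' (g DGen.d) = g DGen.a ∧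
      d' (g DGen.a) = 0 ∧
      d' (g DGen.c) = g DGen.b ∧
      d' (g DGen.b) = 0 := by
  have hone : dd (1 : Dalg) = 0 := by
    have h := hleib 1 1
    simp only [one_mul, mul_one] at h
    exact (left_eq_add.mp h)
  have hPsiR : ∀ z : Dalg, Ψ (Ψinv z) = z := fun z => AlgHom.congr_fun psi_inv_right z
  have hPsiL : ∀ z : Dalg, Ψinv (Ψ z) = z := fun z => AlgHom.congr_fun psi_inv_left z
  have key_x : dd (g DGen.x + (g DGen.r12 * g DGen.a + g DGen.r13) * g DGen.c)
      = 1 + g DGen.r12 := by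
    simp only [map_add, hleib, hx, ha, hb, hc, h12, h13]
    simp [mul_add, add_mul, mul_assoc]
    abel_nf
    simp [twosmul, two_eq_zero]
    try abel
  have key_y : dd (g DGen.y + g DGen.c * (g DGen.a * g DGen.r34 + g DGen.r24))
      = 1 + g DGen.r34 := by
    simp only [map_add, hleib, hy, ha, hb, hc, h34, h24]
    simp [mul_add, add_mul, mul_assoc]
    abel_nf
    simp [twosmul, two_eq_zero]
    try abel
  constructor
  · intro z
    induction z using FreeAlgebra.induction with
    | grade0 r =>
        rw [Algebra.algebraMap_eq_smul_one, map_smul, hone, smul_zero, map_zero]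
    | grade1 v =>
        cases v <;>
          simp only [show ∀ w, FreeAlgebra.ι (ZMod 2) w = g w from fun _ => rfl] <;>
          simp [hleib, hx, hy, ha, hb, hc, hd, h12, h23, h34, h13, h24, h14, hone,
            map_add, mul_add, add_mul, mul_assoc] <;>
          abel_nf <;>
          simp [twosmul, two_eq_zero]
    | mul u v hu hv =>
        rw [hleib, map_add, hleib, hleib, hu, hv, zero_mul, mul_zero, add_zero, zero_add]
        exact addself _
    | add u v hu hv => rw [map_add, map_add, hu, hv, add_zero]
  · refine ⟨Ψ.toLinearMap ∘ₗ dd ∘ₗ Ψinv.toLinearMap, ?_, ?_, ?_, ?_, ?_, ?_, ?_, ?_⟩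
    · intro u v
      simp only [LinearMap.comp_apply, AlgHom.toLinearMap_apply, map_mul, hleib, map_add,
        hPsiR]
    · intro z
      simp only [LinearMap.comp_apply, AlgHom.toLinearMap_apply, hPsiL]
    · -- x
      simp only [LinearMap.comp_apply, AlgHom.toLinearMap_apply, pinv_x, key_x]
      simp [Ψ, φx, φy, φa, g]
    · -- y
      simp only [LinearMap.comp_apply, AlgHom.toLinearMap_apply, pinv_y, key_y]
      simp [Ψ, φx, φy, φa, g]
    · -- d
      simp only [LinearMap.comp_apply, AlgHom.toLinearMap_apply, pinv_d, hd]
      simp [Ψ, φx, φy, φa, g, mul_add, add_mul, mul_assoc]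
      abel_nf
      simp [twosmul, two_eq_zero]
      try abel
    · -- a
      simp only [LinearMap.comp_apply, AlgHom.toLinearMap_apply, pinv_a]
      have : dd (g DGen.a + g DGen.r13 +
          (g DGen.x + (g DGen.r12 * g DGen.a + g DGen.r13) * g DGen.c) * g DGen.r23)
          = 0 := by
        rw [map_add, map_add, hleib, key_x, ha, h13, h23, mul_zero, add_zero]
        rw [add_mul, one_mul]
        abel_nf
        simp [twosmul, two_eq_zero]
      rw [this, map_zero]
    · -- c
      simp only [LinearMap.comp_apply, AlgHom.toLinearMap_apply, pinv_c, hc, psi_b]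
    · -- b
      simp only [LinearMap.comp_apply, AlgHom.toLinearMap_apply, pinv_b, hb, map_zero]
end

section
/- Let $V = \bigoplus_i V_i$ be a chain complex of $\mathbb{F}$-vector spaces and suppose there is a short exact sequence of chain complexes $0 \to W \to V \to C \to 0$ where $C$ has zero differential and is concentrated in degrees $1-2r$ and $1+2r$ with each of those components one-dimensional, for some integer $r \ne 0$. If $H_i(V) = 0$ for all $i \ne 1$, $H_1(V) \cong \mathbb{F}$, and $H_1(W) \ne 0$, then $H_1(W) \cong \mathbb{F}$, $H_{2r}(W) \cong H_{-2r}(W) \cong \mathbb{F}$, $H_0(W) = 0$, and $H_i(W) = 0$ for all $i \notin \{1, 2r, -2r\}$; i.e., the Poincaré polynomial of $H_*(W)$ is $t + t^{2r} + t^{-2r}$. -/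
open CategoryTheory CategoryTheory.Limits

/-- If a short complex is exact with zero outer objects, the middle object is zero. -/
lemma aux_isZero_X₂ {A : Type*} [Category A] [Abelian A] (S : ShortComplex A)
    (hS : S.Exact) (h1 : IsZero S.X₁) (h3 : IsZero S.X₃) : IsZero S.X₂ := by
  have hf : S.f = 0 := h1.eq_of_src _ _
  have hg : S.g = 0 := h3.eq_of_tgt _ _
  rw [S.exact_iff_isZero_homology] at hS
  exact hS.of_iso ((ShortComplex.LeftHomologyData.ofZeros S hf hg).homologyIso).symm

/-- Homology of a complex with zero differentials is the complex itself. -/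
noncomputable def aux_homologyIsoOfZeros (C : ChainComplex (ModuleCat (ZMod 2)) ℤ)
    (hCd : ∀ i j : ℤ, C.d i j = 0) (i : ℤ) : C.homology i ≅ C.X i :=
  (ShortComplex.LeftHomologyData.ofZeros (C.sc i) (hCd _ _) (hCd _ _)).homologyIso

/-- let `0 → W → V → C → 0` be a short exact sequence of chain complexes of
`𝔽 = ℤ/2ℤ`-vector spaces, where `C` has zero differential and is concentrated in degrees
`1 - 2r` and `1 + 2r` (each one-dimensional) for some integer `r ≠ 0`.  If `Hᵢ(V) = 0` for
`i ≠ 1`, `H₁(V) ≅ 𝔽` and `H₁(W) ≠ 0`, then `H₁(W) ≅ 𝔽`, `H_{2r}(W) ≅ H_{-2r}(W) ≅ 𝔽`,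
`H₀(W) = 0`, and `Hᵢ(W) = 0` for `i ∉ {1, 2r, -2r}`; i.e. the Poincaré polynomial of
`H_*(W)` is `t + t^{2r} + t^{-2r}`. -/
theorem whitehead_double_homology (r : ℤ) (hr : r ≠ 0)
    (W V C : ChainComplex (ModuleCat (ZMod 2)) ℤ)
    (φ : W ⟶ V) (ψ : V ⟶ C) (hzero : φ ≫ ψ = 0)
    (hse : (CategoryTheory.ShortComplex.mk φ ψ hzero).ShortExact)
    (hCd : ∀ i j : ℤ, C.d i j = 0)
    (hCconc : ∀ i : ℤ, i ≠ 1 - 2 * r → i ≠ 1 + 2 * r → IsZero (C.X i))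
    (hC₁ : Module.finrank (ZMod 2) (C.X (1 - 2 * r)) = 1)
    (hC₂ : Module.finrank (ZMod 2) (C.X (1 + 2 * r)) = 1)
    (hV : ∀ i : ℤ, i ≠ 1 → IsZero (V.homology i))
    (hV₁ : Module.finrank (ZMod 2) (V.homology 1) = 1)
    (hW₁ : ¬ IsZero (W.homology 1)) :
    Module.finrank (ZMod 2) (W.homology 1) = 1 ∧
    Module.finrank (ZMod 2) (W.homology (2 * r)) = 1 ∧
    Module.finrank (ZMod 2) (W.homology (-(2 * r))) = 1 ∧
    IsZero (W.homology 0) ∧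
    (∀ i : ℤ, i ≠ 1 → i ≠ 2 * r → i ≠ -(2 * r) → IsZero (W.homology i)) := by
  -- homology of C
  have hCH : ∀ i : ℤ, i ≠ 1 - 2 * r → i ≠ 1 + 2 * r → IsZero (C.homology i) := by
    intro i h1 h2
    exact (hCconc i h1 h2).of_iso (aux_homologyIsoOfZeros C hCd i)
  -- degree 1 : H₁(W) ≅ H₁(V)
  have hrel : ∀ i : ℤ, (ComplexShape.down ℤ).Rel (i + 1) i := by
    intro i; simp
  have key1 : Module.finrank (ZMod 2) (W.homology 1) = 1 := by
    have hmono : Mono (HomologicalComplex.homologyMap φ 1) := by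
      have hex := hse.homology_exact₁ 2 1 (hrel 1)
      have hz : IsZero (C.homology 2) := hCH 2 (by omega) (by omega)
      exact hex.mono_g (hz.eq_of_src _ _)
    have hepi : Epi (HomologicalComplex.homologyMap φ 1) := by
      have hex := hse.homology_exact₂ 1
      have hz : IsZero (C.homology 1) := hCH 1 (by omega) (by omega)
      exact hex.epi_f (hz.eq_of_tgt _ _)
    have : IsIso (HomologicalComplex.homologyMap φ 1) := isIso_of_mono_of_epi _
    rw [(asIso (HomologicalComplex.homologyMap φ 1)).toLinearEquiv.finrank_eq]
    exact hV₁
  -- general iso δ : H_{i+1}(C) ≅ H_i(W) when H_{i+1}(V) = 0 = H_i(V)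
  have keyδ : ∀ i : ℤ, i + 1 ≠ 1 → i ≠ 1 →
      Module.finrank (ZMod 2) (W.homology i) =
      Module.finrank (ZMod 2) (C.homology (i + 1)) := by
    intro i h1 h2
    have hmono : Mono (hse.δ (i + 1) i (hrel i)) := by
      have hex := hse.homology_exact₃ (i + 1) i (hrel i)
      exact hex.mono_g ((hV _ h1).eq_of_src _ _)
    have hepi : Epi (hse.δ (i + 1) i (hrel i)) := by
      have hex := hse.homology_exact₁ (i + 1) i (hrel i)
      exact hex.epi_f ((hV _ h2).eq_of_tgt _ _)
    have : IsIso (hse.δ (i + 1) i (hrel i)) := isIso_of_mono_of_epi _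
    exact ((asIso (hse.δ (i + 1) i (hrel i))).toLinearEquiv.finrank_eq).symm
  have key2 : Module.finrank (ZMod 2) (W.homology (2 * r)) = 1 := by
    rw [keyδ (2 * r) (by omega) (by omega)]
    have e := aux_homologyIsoOfZeros C hCd (2 * r + 1)
    rw [e.toLinearEquiv.finrank_eq]
    have : (2 * r + 1 : ℤ) = 1 + 2 * r := by ring
    rw [this]
    exact hC₂
  have key3 : Module.finrank (ZMod 2) (W.homology (-(2 * r))) = 1 := by
    rw [keyδ (-(2 * r)) (by omega) (by omega)]
    have e := aux_homologyIsoOfZeros C hCd (-(2 * r) + 1)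
    rw [e.toLinearEquiv.finrank_eq]
    have : (-(2 * r) + 1 : ℤ) = 1 - 2 * r := by ring
    rw [this]
    exact hC₁
  have key0 : ∀ i : ℤ, i ≠ 1 → i ≠ 2 * r → i ≠ -(2 * r) → IsZero (W.homology i) := by
    intro i h1 h2 h3
    have hex := hse.homology_exact₁ (i + 1) i (hrel i)
    exact aux_isZero_X₂ _ hex (hCH (i + 1) (by omega) (by omega)) (hV i h1)
  exact ⟨key1, key2, key3, key0 0 (by omega) (by omega) (by omega), key0⟩
end
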